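/- Let V ⊂ ℙ²×ℙ² be the common zero set of x₀y₂ − x₂y₁, x₁y₂ − x₂y₁, and x₀y₁y₂ − x₁y₀y₂. Then V equals the union of the four sets S₁ = {([x₀:x₁:x₂],[1:0:0])}, S₂ = {([x₀:x₁:0],[y₀:y₁:0])}, C₁ = {([x₀:x₀:x₂],[y₀:y₀:y₂]) : x₂y₀ = x₀y₂}, and C₂ = {([0:0:1],[y₀:0:y₂])}. -/
import Mathlib


/-- Irreducible decomposition in `ℙ²×ℙ²` (in terms of nonzero representative
vectors): the three bihomogeneous equations hold iff the point lies in
`S₁ ∪ S₂ ∪ C₁ ∪ C₂`. -/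
theorem stmt_9 (x y : Fin 3 → ℂ) (hx : x ≠ 0) (hy : y ≠ 0) :
    (x 0 * y 2 - x 2 * y 1 = 0 ∧ x 1 * y 2 - x 2 * y 1 = 0 ∧
     x 0 * y 1 * y 2 - x 1 * y 0 * y 2 = 0) ↔
    ((y 1 = 0 ∧ y 2 = 0) ∨
     (x 2 = 0 ∧ y 2 = 0) ∨
     (x 1 = x 0 ∧ y 1 = y 0 ∧ x 2 * y 0 = x 0 * y 2) ∨
     (x 0 = 0 ∧ x 1 = 0 ∧ y 1 = 0)) := by
  constructor
  · rintro ⟨e1, e2, e3⟩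
    by_cases hy2 : y 2 = 0
    · have h : x 2 * y 1 = 0 := by linear_combination -e1 + x 0 * hy2
      rcases mul_eq_zero.mp h with h | h
      · exact Or.inr (Or.inl ⟨h, hy2⟩)
      · exact Or.inl ⟨h, hy2⟩
    · have hx01 : x 1 = x 0 := by
        have : (x 0 - x 1) * y 2 = 0 := by linear_combination e1 - e2
        rcases mul_eq_zero.mp this with h | h
        · exact (sub_eq_zero.mp h).symm
        · exact absurd h hy2
      by_cases hx0 : x 0 = 0
      · have hx1 : x 1 = 0 := by rw [hx01, hx0]
        have hx2 : x 2 ≠ 0 := by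
          intro h2
          apply hx
          funext i
          fin_cases i <;> simpa [hx0, hx1, h2]
        have hy1 : y 1 = 0 := by
          have : x 2 * y 1 = 0 := by linear_combination -e1 + y 2 * hx0
          exact (mul_eq_zero.mp this).resolve_left hx2
        exact Or.inr (Or.inr (Or.inr ⟨hx0, hx1, hy1⟩))
      · have hy01 : y 1 = y 0 := by
          have : x 0 * (y 1 - y 0) * y 2 = 0 := by
            linear_combination e3 + y 0 * y 2 * hx01
          rcases mul_eq_zero.mp this with h | h
          · rcases mul_eq_zero.mp h with h | h
            · exact absurd h hx0
            · exact sub_eq_zero.mp h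
          · exact absurd h hy2
        refine Or.inr (Or.inr (Or.inl ⟨hx01, hy01, ?_⟩))
        linear_combination -e1 - x 2 * hy01
  · rintro (⟨h1, h2⟩ | ⟨h1, h2⟩ | ⟨h1, h2, h3⟩ | ⟨h1, h2, h3⟩)
    · exact ⟨by linear_combination x 0 * h2 - x 2 * h1,
        by linear_combination x 1 * h2 - x 2 * h1,
        by linear_combination (x 0 * y 1 - x 1 * y 0) * h2⟩
    · exact ⟨by linear_combination x 0 * h2 - y 1 * h1,
        by linear_combination x 1 * h2 - y 1 * h1,
        by linear_combination (x 0 * y 1 - x 1 * y 0) * h2⟩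
    · exact ⟨by linear_combination -h3 - x 2 * h2,
        by linear_combination y 2 * h1 - h3 - x 2 * h2,
        by linear_combination x 0 * y 2 * h2 - y 0 * y 2 * h1⟩
    · exact ⟨by linear_combination y 2 * h1 - x 2 * h3,
        by linear_combination y 2 * h2 - x 2 * h3,
        by linear_combination y 1 * y 2 * h1 - y 0 * y 2 * h2⟩
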